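/- (Discrete version of the I-Max equivalence theorem.) Let (Ω,P) be a finite probability space, y : Ω → {0,1}, and m : Ω → Fin M a discrete random variable with P(m=i) > 0 for all i. For parameters φ : Fin M → ℝ define the loss L(φ) = Σ_i Σ_{y'∈{0,1}} P(m=i, y=y') · log( P(y=y') / σ((2y'−1)·φ(i)) ), assuming P(y=0) > 0 and P(y=1) > 0. Then I(y;m) + L(φ) = Σ_i P(m=i) · KL( P(y=1|m=i) ‖ σ(φ(i)) ) ≥ 0, where KL is the binary KL divergence (with the convention that KL(p‖q) for p ∈ {0,1} uses 0·log 0 = 0). In particular L(φ) ≥ −I(y;m) for all φ. -/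
import Mathlib


open scoped BigOperators

attribute [local instance] Classical.propDecidable

/-- Probability of an event on a finite probability space given by a mass function. -/
noncomputable def Pr {Ω : Type*} [Fintype Ω] (P : Ω → ℝ) (E : Ω → Prop) : ℝ :=
  ∑ ω, if E ω then P ω else 0

/-- Discrete mutual information `I(U;V)` (convention: terms with zero joint
probability contribute `0`). -/
noncomputable def mi {Ω α β : Type*} [Fintype Ω] [Fintype α] [Fintype β]
    (P : Ω → ℝ) (U : Ω → α) (V : Ω → β) : ℝ :=
  ∑ a : α, ∑ b : β,
    if Pr P (fun ω => U ω = a ∧ V ω = b) = 0 then 0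
    else Pr P (fun ω => U ω = a ∧ V ω = b) *
      Real.log (Pr P (fun ω => U ω = a ∧ V ω = b) /
        (Pr P (fun ω => U ω = a) * Pr P (fun ω => V ω = b)))

/-- Shannon entropy `H(U)` (convention: `0 log 0 = 0`). -/
noncomputable def ent {Ω α : Type*} [Fintype Ω] [Fintype α]
    (P : Ω → ℝ) (U : Ω → α) : ℝ :=
  -∑ a : α,
    if Pr P (fun ω => U ω = a) = 0 then 0
    else Pr P (fun ω => U ω = a) * Real.log (Pr P (fun ω => U ω = a))

/-- Conditional entropy `H(U|V)` (convention: terms with zero joint probability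
contribute `0`). -/
noncomputable def condEnt {Ω α β : Type*} [Fintype Ω] [Fintype α] [Fintype β]
    (P : Ω → ℝ) (U : Ω → α) (V : Ω → β) : ℝ :=
  -∑ a : α, ∑ b : β,
    if Pr P (fun ω => U ω = a ∧ V ω = b) = 0 then 0
    else Pr P (fun ω => U ω = a ∧ V ω = b) *
      Real.log (Pr P (fun ω => U ω = a ∧ V ω = b) / Pr P (fun ω => V ω = b))

noncomputable def sigmoid (x : ℝ) : ℝ := 1 / (1 + Real.exp (-x))

/-- Binary KL divergence, extended by the convention `0·log 0 = 0` to `p ∈ {0,1}`. -/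
noncomputable def klBinE (p q : ℝ) : ℝ :=
  (if p = 0 then 0 else p * Real.log (p / q)) +
  (if p = 1 then 0 else (1 - p) * Real.log ((1 - p) / (1 - q)))

lemma sigmoid_pos (x : ℝ) : 0 < sigmoid x := by
  unfold sigmoid; positivity

lemma sigmoid_lt_one (x : ℝ) : sigmoid x < 1 := by
  unfold sigmoid
  rw [div_lt_one (by positivity)]
  linarith [Real.exp_pos (-x)]

lemma one_sub_sigmoid (x : ℝ) : 1 - sigmoid x = sigmoid (-x) := by
  unfold sigmoid
  rw [neg_neg]
  have h1 : (0:ℝ) < 1 + Real.exp (-x) := by positivity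
  have h2 : (0:ℝ) < 1 + Real.exp x := by positivity
  have h3 : Real.exp (-x) * Real.exp x = 1 := by
    rw [← Real.exp_add]; simp
  field_simp
  nlinarith [h3]

lemma Pr_nonneg {Ω : Type*} [Fintype Ω] (P : Ω → ℝ) (hP : ∀ ω, 0 ≤ P ω) (E : Ω → Prop) :
    0 ≤ Pr P E := by
  apply Finset.sum_nonneg
  intro ω _
  split
  · exact hP ω
  · exact le_refl 0

lemma Pr_comm {Ω : Type*} [Fintype Ω] (P : Ω → ℝ) (A B : Ω → Prop) :
    Pr P (fun ω => A ω ∧ B ω) = Pr P (fun ω => B ω ∧ A ω) := by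
  unfold Pr
  apply Finset.sum_congr rfl
  intro ω _
  by_cases h : A ω ∧ B ω
  · rw [if_pos h, if_pos (and_comm.mp h)]
  · rw [if_neg h, if_neg fun hc => h (and_comm.mp hc)]

lemma Pr_partition {Ω : Type*} [Fintype Ω] {M : ℕ} (P : Ω → ℝ)
    (y : Ω → Fin 2) (m : Ω → Fin M) (i : Fin M) :
    ∑ a : Fin 2, Pr P (fun ω => y ω = a ∧ m ω = i) = Pr P (fun ω => m ω = i) := by
  unfold Pr
  rw [Finset.sum_comm]
  apply Finset.sum_congr rfl
  intro ω _
  by_cases h : m ω = i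
  · simp [h, Finset.sum_ite_eq]
  · simp [h]

lemma klBinE_nonneg {p q : ℝ} (hp0 : 0 ≤ p) (hp1 : p ≤ 1) (hq0 : 0 < q) (hq1 : q < 1) :
    0 ≤ klBinE p q := by
  unfold klBinE
  have hq1' : 0 < 1 - q := by linarith
  by_cases h0 : p = 0
  · subst h0
    norm_num
    exact Real.log_nonpos (by linarith) (by linarith)
  by_cases h1 : p = 1
  · subst h1
    norm_num
    exact Real.log_nonpos (by linarith) (by linarith)
  · have hp : 0 < p := lt_of_le_of_ne hp0 (Ne.symm h0)
    have hp' : p < 1 := lt_of_le_of_ne hp1 h1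
    have hp1' : 0 < 1 - p := by linarith
    rw [if_neg h0, if_neg h1]
    have A : Real.log (q / p) ≤ q / p - 1 := Real.log_le_sub_one_of_pos (by positivity)
    have B : Real.log ((1 - q) / (1 - p)) ≤ (1 - q) / (1 - p) - 1 :=
      Real.log_le_sub_one_of_pos (by positivity)
    rw [Real.log_div hq0.ne' hp.ne'] at A
    rw [Real.log_div hq1'.ne' hp1'.ne'] at B
    rw [Real.log_div hp.ne' hq0.ne', Real.log_div hp1'.ne' hq1'.ne']
    have A2 : p * (Real.log q - Real.log p) ≤ q - p := by
      have := mul_le_mul_of_nonneg_left A hp.le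
      have e : p * (q / p - 1) = q - p := by field_simp
      linarith [this, e.ge]
    have B2 : (1 - p) * (Real.log (1 - q) - Real.log (1 - p)) ≤ (1 - q) - (1 - p) := by
      have := mul_le_mul_of_nonneg_left B hp1'.le
      have e : (1 - p) * ((1 - q) / (1 - p) - 1) = (1 - q) - (1 - p) := by field_simp
      linarith [this, e.ge]
    nlinarith [A2, B2]

lemma key_id (j0 j1 pm py0 py1 q : ℝ) (h0 : 0 ≤ j0) (h1 : 0 ≤ j1) (hpm : 0 < pm)
    (hsumj : j0 + j1 = pm) (hpy0 : 0 < py0) (hpy1 : 0 < py1) (hq0 : 0 < q) (hq1 : q < 1) :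
    ((if j0 = 0 then 0 else j0 * Real.log (j0 / (py0 * pm))) +
     (if j1 = 0 then 0 else j1 * Real.log (j1 / (py1 * pm)))) +
    (j0 * Real.log (py0 / (1 - q)) + j1 * Real.log (py1 / q)) =
    pm * klBinE (j1 / pm) q := by
  have hq1' : (0:ℝ) < 1 - q := by linarith
  unfold klBinE
  by_cases hj1 : j1 = 0
  · have hj0 : j0 = pm := by linarith
    subst hj1; subst hj0
    rw [if_neg hpm.ne', if_pos rfl, if_pos (by simp), if_neg (by norm_num)]
    rw [Real.log_div hpm.ne' (by positivity), Real.log_mul hpy0.ne' hpm.ne',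
      Real.log_div hpy0.ne' hq1'.ne']
    norm_num
    ring
  by_cases hj0 : j0 = 0
  · have hj1' : j1 = pm := by linarith
    subst hj0; subst hj1'
    rw [if_pos rfl, if_neg hpm.ne', div_self hpm.ne',
      if_neg one_ne_zero, if_pos rfl]
    rw [Real.log_div hpm.ne' (by positivity), Real.log_mul hpy1.ne' hpm.ne',
      Real.log_div hpy1.ne' hq0.ne', Real.log_div one_ne_zero hq0.ne', Real.log_one]
    ring
  · have hj0p : 0 < j0 := lt_of_le_of_ne h0 (Ne.symm hj0)
    have hj1p : 0 < j1 := lt_of_le_of_ne h1 (Ne.symm hj1)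
    have hplt : j1 / pm < 1 := by rw [div_lt_one hpm]; linarith
    rw [if_neg hj0, if_neg hj1, if_neg (by positivity), if_neg (ne_of_lt hplt)]
    have e6 : 1 - j1 / pm = j0 / pm := by field_simp; linarith
    rw [e6]
    rw [Real.log_div hj0 (by positivity), Real.log_mul hpy0.ne' hpm.ne',
      Real.log_div hj1 (by positivity), Real.log_mul hpy1.ne' hpm.ne',
      Real.log_div hpy0.ne' hq1'.ne', Real.log_div hpy1.ne' hq0.ne',
      Real.log_div (by positivity : j1/pm ≠ 0) hq0.ne',
      Real.log_div (by positivity : j0/pm ≠ 0) hq1'.ne',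
      Real.log_div hj1 hpm.ne', Real.log_div hj0 hpm.ne']
    field_simp
    ring

/-- Discrete version of the I-Max equivalence theorem:
`I(y;m) + L(φ) = Σ_i P(m=i)·KL(P(y=1|m=i) ‖ σ(φ i)) ≥ 0`. -/
theorem imax_equivalence_discrete {Ω : Type*} [Fintype Ω] {M : ℕ}
    (P : Ω → ℝ) (hP : ∀ ω, 0 ≤ P ω) (hsum : ∑ ω, P ω = 1)
    (y : Ω → Fin 2) (m : Ω → Fin M)
    (hm : ∀ i : Fin M, 0 < Pr P (fun ω => m ω = i))
    (hy0 : 0 < Pr P (fun ω => y ω = 0))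
    (hy1 : 0 < Pr P (fun ω => y ω = 1))
    (L : (Fin M → ℝ) → ℝ)
    (hL : L = fun φ => ∑ i : Fin M, ∑ y' : Fin 2,
      Pr P (fun ω => m ω = i ∧ y ω = y') *
        Real.log (Pr P (fun ω => y ω = y') /
          sigmoid ((2 * ((y' : ℕ) : ℝ) - 1) * φ i)))
    (φ : Fin M → ℝ) :
    mi P y m + L φ =
      (∑ i : Fin M, Pr P (fun ω => m ω = i) *
        klBinE (Pr P (fun ω => y ω = 1 ∧ m ω = i) / Pr P (fun ω => m ω = i))
          (sigmoid (φ i))) ∧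
    0 ≤ mi P y m + L φ ∧
    -(mi P y m) ≤ L φ := by
  have hpart : ∀ i : Fin M,
      Pr P (fun ω => y ω = 0 ∧ m ω = i) + Pr P (fun ω => y ω = 1 ∧ m ω = i)
        = Pr P (fun ω => m ω = i) := by
    intro i
    have := Pr_partition P y m i
    rwa [Fin.sum_univ_two] at this
  have hnn : ∀ (E : Ω → Prop), 0 ≤ Pr P E := Pr_nonneg P hP
  have heq : mi P y m + L φ =
      ∑ i : Fin M, Pr P (fun ω => m ω = i) *
        klBinE (Pr P (fun ω => y ω = 1 ∧ m ω = i) / Pr P (fun ω => m ω = i))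
          (sigmoid (φ i)) := by
    subst hL
    simp only
    unfold mi
    rw [Finset.sum_comm, ← Finset.sum_add_distrib]
    apply Finset.sum_congr rfl
    intro i _
    rw [Fin.sum_univ_two, Fin.sum_univ_two]
    simp only [Fin.isValue, Fin.val_zero, Fin.val_one, Nat.cast_zero, Nat.cast_one]
    have ha0 : (2 * (0:ℝ) - 1) * φ i = -(φ i) := by ring
    have ha1 : (2 * (1:ℝ) - 1) * φ i = φ i := by ring
    rw [ha0, ha1, ← one_sub_sigmoid]
    rw [Pr_comm P (fun ω => m ω = i) (fun ω => y ω = 0),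
      Pr_comm P (fun ω => m ω = i) (fun ω => y ω = 1)]
    exact key_id _ _ _ _ _ _ (hnn _) (hnn _) (hm i) (hpart i) hy0 hy1
      (sigmoid_pos _) (sigmoid_lt_one _)
  refine ⟨heq, ?_, ?_⟩
  · rw [heq]
    apply Finset.sum_nonneg
    intro i _
    apply mul_nonneg (hnn _)
    apply klBinE_nonneg
    · exact div_nonneg (hnn _) (hnn _)
    · rw [div_le_one (hm i)]
      have := hpart i
      have := hnn (fun ω => y ω = 0 ∧ m ω = i)
      linarith
    · exact sigmoid_pos _
    · exact sigmoid_lt_one _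
  · have h2 : 0 ≤ mi P y m + L φ := by
      rw [heq]
      apply Finset.sum_nonneg
      intro i _
      apply mul_nonneg (hnn _)
      apply klBinE_nonneg
      · exact div_nonneg (hnn _) (hnn _)
      · rw [div_le_one (hm i)]
        have := hpart i
        have := hnn (fun ω => y ω = 0 ∧ m ω = i)
        linarith
      · exact sigmoid_pos _
      · exact sigmoid_lt_one _
    linarith
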